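/- arXiv:2512.18268 — 3 statements merged into one kernel-verified Lean document; each statement's English description precedes it below -/
import Mathlib

section
/- Farthest-first (Gonzalez) clustering is a 2-approximation for the k-center problem: let X be a metric space, P ⊆ X a finite nonempty set, and let c₀, c₁, …, c_k ∈ P be a farthest-first traversal, meaning that for each j with 1 ≤ j ≤ k, c_j ∈ P and for every p ∈ P, min_{0 ≤ i < j} dist(p, c_i) ≤ min_{0 ≤ i < j} dist(c_j, c_i). Let r = max_{p ∈ P} min_{0 ≤ i < k} dist(p, c_i) be the covering radius of the first k centers. Then for any centers y₁, …, y_k ∈ X and any r' ≥ 0 with P contained in the union of the closed balls of radius r' centered at y₁, …, y_k, one has r' ≥ r/2. -/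
/-- Farthest-first (Gonzalez) clustering is a 2-approximation for the `k`-center problem:
if `c₀, c₁, …, c_k ∈ P` is a farthest-first traversal of a finite nonempty set `P`
(each `c_j`, `j ≥ 1`, is at least as far from the previously chosen centers as any point
of `P`), and `r` is the covering radius of the first `k` centers, then any cover of `P`
by `k` closed balls of radius `r'` has `r' ≥ r / 2`. -/
theorem farthest_first_two_approx
    {X : Type*} [MetricSpace X] (k : ℕ) (hk : 0 < k)
    (P : Finset X) (hP : P.Nonempty)
    (c : Fin (k + 1) → X) (hcP : ∀ j, c j ∈ P)
    (hff : ∀ j : Fin (k + 1), 0 < j.val → ∀ p ∈ P,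
      (⨅ i : {i : Fin (k + 1) // i < j}, dist p (c i.1)) ≤
        ⨅ i : {i : Fin (k + 1) // i < j}, dist (c j) (c i.1))
    (r : ℝ)
    (hr : r = P.sup' hP fun p => ⨅ i : Fin k, dist p (c i.castSucc))
    (y : Fin k → X) (r' : ℝ) (hr' : 0 ≤ r')
    (hcov : (P : Set X) ⊆ ⋃ i, Metric.closedBall (y i) r') :
    r / 2 ≤ r' := by
  have key : ∀ a b : Fin (k + 1), a < b → r ≤ dist (c b) (c a) := by
    intro a b hab
    have hb0 : 0 < b.val := lt_of_le_of_lt (Nat.zero_le a.val) hab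
    rw [hr]
    apply Finset.sup'_le
    intro p hp
    have h1 : (⨅ i : Fin k, dist p (c i.castSucc)) ≤
        ⨅ i : {i : Fin (k + 1) // i < b}, dist p (c i.1) := by
      have : Nonempty {i : Fin (k + 1) // i < b} := ⟨⟨⟨0, Nat.succ_pos k⟩, hb0⟩⟩
      apply le_ciInf
      intro i
      have hik : i.1.val < k := lt_of_lt_of_le i.2 (Nat.lt_succ_iff.mp b.isLt)
      have heq : ((⟨i.1.val, hik⟩ : Fin k)).castSucc = i.1 := by
        ext; simp
      calc (⨅ j : Fin k, dist p (c j.castSucc))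
          ≤ dist p (c ((⟨i.1.val, hik⟩ : Fin k)).castSucc) :=
            ciInf_le ⟨0, by rintro _ ⟨j, rfl⟩; exact dist_nonneg⟩ _
        _ = dist p (c i.1) := by rw [heq]
    have h2 := hff b hb0 p hp
    have h3 : (⨅ i : {i : Fin (k + 1) // i < b}, dist (c b) (c i.1)) ≤ dist (c b) (c a) :=
      ciInf_le (f := fun i : {i : Fin (k + 1) // i < b} => dist (c b) (c i.1)) ⟨0, by rintro _ ⟨j, rfl⟩; exact dist_nonneg⟩ ⟨a, hab⟩
    linarith
  have hball : ∀ j : Fin (k + 1), ∃ i : Fin k, c j ∈ Metric.closedBall (y i) r' := by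
    intro j
    have := hcov (hcP j)
    simpa using this
  choose f hf using hball
  obtain ⟨a, b, hab, hfab⟩ :=
    Fintype.exists_ne_map_eq_of_card_lt f (by simp)
  have h2r : dist (c a) (c b) ≤ 2 * r' := by
    have h1 := hf a
    have h2 := hf b
    rw [Metric.mem_closedBall] at h1 h2
    rw [hfab] at h1
    calc dist (c a) (c b) ≤ dist (c a) (y (f b)) + dist (y (f b)) (c b) := dist_triangle _ _ _
      _ ≤ r' + r' := add_le_add h1 (by rw [dist_comm]; exact h2)
      _ = 2 * r' := by ring
  rcases hab.lt_or_gt with h | h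
  · have hk2 := key a b h
    rw [dist_comm] at hk2
    linarith
  · have hk2 := key b a h
    linarith
end

section
/- Let S ⊆ ℝ² be nonempty and suppose S can be covered by k squares of side length ℓ with arbitrary centers and orientations. Then S can be covered by k axis-aligned squares of side length 2√2·ℓ whose centers all lie in S: there exist points p₁, …, p_k ∈ S such that S is contained in the union of the closed L∞ balls of radius √2·ℓ centered at p₁, …, p_k. (This is the feasibility underlying the 2.828-approximation for the constrained square coverage problem, where square centers must lie in the region.) -/
/-- The square of side length `ℓ` with center `c` and orientation `θ`:
the set `{c + R_θ v : v ∈ [-ℓ/2, ℓ/2]²}` where `R_θ` is rotation by `θ`. -/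
def rotSquare (ℓ : ℝ) (c : ℝ × ℝ) (θ : ℝ) : Set (ℝ × ℝ) :=
  {p | ∃ v : ℝ × ℝ, |v.1| ≤ ℓ / 2 ∧ |v.2| ≤ ℓ / 2 ∧
    p = (c.1 + (v.1 * Real.cos θ - v.2 * Real.sin θ),
         c.2 + (v.1 * Real.sin θ + v.2 * Real.cos θ))}

lemma key_abs (a b co s ℓ : ℝ) (hℓ : 0 ≤ ℓ) (ha : |a| ≤ ℓ) (hb : |b| ≤ ℓ)
    (hcs : co ^ 2 + s ^ 2 = 1) : |a * co - b * s| ≤ Real.sqrt 2 * ℓ := by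
  have ha2 : a ^ 2 ≤ ℓ ^ 2 := by
    rw [← sq_abs a]; exact pow_le_pow_left₀ (abs_nonneg a) ha 2
  have hb2 : b ^ 2 ≤ ℓ ^ 2 := by
    rw [← sq_abs b]; exact pow_le_pow_left₀ (abs_nonneg b) hb 2
  have h2 : (a * co - b * s) ^ 2 ≤ (Real.sqrt 2 * ℓ) ^ 2 := by
    have hs2 : Real.sqrt 2 ^ 2 = 2 := Real.sq_sqrt (by norm_num)
    nlinarith [sq_nonneg (a * s + b * co)]
  have hpos : 0 ≤ Real.sqrt 2 * ℓ := mul_nonneg (Real.sqrt_nonneg 2) hℓ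
  have := abs_le_of_sq_le_sq' h2 hpos
  exact abs_le.mpr this

lemma rotSquare_dist (ℓ : ℝ) (hℓ : 0 ≤ ℓ) (c : ℝ × ℝ) (θ : ℝ) {x y : ℝ × ℝ}
    (hx : x ∈ rotSquare ℓ c θ) (hy : y ∈ rotSquare ℓ c θ) :
    dist x y ≤ Real.sqrt 2 * ℓ := by
  obtain ⟨v, hv1, hv2, rfl⟩ := hx
  obtain ⟨w, hw1, hw2, rfl⟩ := hy
  have hcs : Real.cos θ ^ 2 + Real.sin θ ^ 2 = 1 := Real.cos_sq_add_sin_sq θ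
  have h1 : |v.1 - w.1| ≤ ℓ := by
    calc |v.1 - w.1| ≤ |v.1| + |w.1| := abs_sub v.1 w.1
    _ ≤ ℓ / 2 + ℓ / 2 := add_le_add hv1 hw1
    _ = ℓ := by ring
  have h2 : |v.2 - w.2| ≤ ℓ := by
    calc |v.2 - w.2| ≤ |v.2| + |w.2| := abs_sub v.2 w.2
    _ ≤ ℓ / 2 + ℓ / 2 := add_le_add hv2 hw2
    _ = ℓ := by ring
  rw [Prod.dist_eq]
  apply max_le
  · rw [Real.dist_eq]
    have := key_abs (v.1 - w.1) (v.2 - w.2) (Real.cos θ) (Real.sin θ) ℓ hℓ h1 h2 hcs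
    convert this using 2
    exacts [rfl, by dsimp only; ring]
  · rw [Real.dist_eq]
    have hsc : Real.sin θ ^ 2 + Real.cos θ ^ 2 = 1 := Real.sin_sq_add_cos_sq θ
    have := key_abs (v.1 - w.1) (-(v.2 - w.2)) (Real.sin θ) (Real.cos θ) ℓ hℓ h1
      (by rwa [abs_neg]) hsc
    convert this using 2
    exacts [rfl, by dsimp only; ring]

/-- If a nonempty set `S ⊆ ℝ²` can be covered by `k` squares of side length `ℓ` with
arbitrary centers and orientations, then `S` can be covered by `k` axis-aligned squares of
side length `2√2·ℓ` (closed L∞ balls of radius `√2·ℓ`) whose centers all lie in `S`. -/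
theorem constrained_axis_aligned_cover_of_square_cover
    (S : Set (ℝ × ℝ)) (hS : S.Nonempty) (k : ℕ) (ℓ : ℝ) (hℓ : 0 ≤ ℓ)
    (c : Fin k → ℝ × ℝ) (θ : Fin k → ℝ)
    (hcov : S ⊆ ⋃ i, rotSquare ℓ (c i) (θ i)) :
    ∃ p : Fin k → ℝ × ℝ, (∀ i, p i ∈ S) ∧
      S ⊆ ⋃ i, Metric.closedBall (p i) (Real.sqrt 2 * ℓ) := by
  classical
  refine ⟨fun i => if h : (S ∩ rotSquare ℓ (c i) (θ i)).Nonempty then h.choose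
    else hS.choose, ?_, ?_⟩
  · intro i
    by_cases h : (S ∩ rotSquare ℓ (c i) (θ i)).Nonempty
    · simp only [dif_pos h]; exact h.choose_spec.1
    · simp only [dif_neg h]; exact hS.choose_spec
  · intro x hx
    obtain ⟨i, hi⟩ := Set.mem_iUnion.mp (hcov hx)
    have h : (S ∩ rotSquare ℓ (c i) (θ i)).Nonempty := ⟨x, hx, hi⟩
    refine Set.mem_iUnion.mpr ⟨i, ?_⟩
    simp only [dif_pos h, Metric.mem_closedBall]
    exact rotSquare_dist ℓ hℓ (c i) (θ i) hi h.choose_spec.2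
end

section
/- The sampling-plus-farthest-first algorithm for square coverage is 2√2-optimal: let P ⊆ ℝ² be a finite nonempty set that can be covered by k squares of side length ℓ with arbitrary centers and orientations, and let c₀, c₁, …, c_{k−1} ∈ P be a farthest-first traversal of P with respect to the sup (L∞) metric on ℝ² (each c_j for j ≥ 1 maximizes over p ∈ P the L∞ distance from p to {c₀, …, c_{j−1}}). Then the L∞ covering radius r = max_{p ∈ P} min_{0 ≤ i < k} dist_∞(p, c_i) satisfies r ≤ √2·ℓ; consequently the k axis-aligned squares of side length 2√2·ℓ centered at c₀, …, c_{k−1} cover P. -/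
lemma abs_cos_add_abs_sin_le (θ : ℝ) : |Real.cos θ| + |Real.sin θ| ≤ Real.sqrt 2 := by
  have h2 : ((Real.sqrt 2) : ℝ) ^ 2 = 2 := Real.sq_sqrt (by norm_num)
  nlinarith [Real.sqrt_nonneg 2, abs_nonneg (Real.cos θ), abs_nonneg (Real.sin θ),
    sq_abs (Real.cos θ), sq_abs (Real.sin θ), Real.sin_sq_add_cos_sq θ,
    sq_nonneg (|Real.cos θ| - |Real.sin θ|),
    sq_nonneg (|Real.cos θ| + |Real.sin θ| - Real.sqrt 2)]

lemma rotSquare_diam {ℓ : ℝ} (hℓ : 0 ≤ ℓ) {c : ℝ × ℝ} {θ : ℝ} {p q : ℝ × ℝ}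
    (hp : p ∈ rotSquare ℓ c θ) (hq : q ∈ rotSquare ℓ c θ) :
    dist p q ≤ Real.sqrt 2 * ℓ := by
  obtain ⟨v, hv1, hv2, rfl⟩ := hp
  obtain ⟨w, hw1, hw2, rfl⟩ := hq
  have ha : |v.1 - w.1| ≤ ℓ := by
    calc |v.1 - w.1| ≤ |v.1| + |w.1| := abs_sub v.1 w.1
    _ ≤ ℓ := by linarith
  have hb : |v.2 - w.2| ≤ ℓ := by
    calc |v.2 - w.2| ≤ |v.2| + |w.2| := abs_sub v.2 w.2
    _ ≤ ℓ := by linarith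
  have hcs := abs_cos_add_abs_sin_le θ
  have hcos : |Real.cos θ| ≤ 1 := Real.abs_cos_le_one θ
  have hsin : |Real.sin θ| ≤ 1 := Real.abs_sin_le_one θ
  refine max_le ?_ ?_
  · rw [Real.dist_eq]
    have : c.1 + (v.1 * Real.cos θ - v.2 * Real.sin θ) -
        (c.1 + (w.1 * Real.cos θ - w.2 * Real.sin θ)) =
        (v.1 - w.1) * Real.cos θ - (v.2 - w.2) * Real.sin θ := by ring
    rw [this]
    calc |(v.1 - w.1) * Real.cos θ - (v.2 - w.2) * Real.sin θ|
        ≤ |(v.1 - w.1) * Real.cos θ| + |(v.2 - w.2) * Real.sin θ| := abs_sub _ _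
      _ = |v.1 - w.1| * |Real.cos θ| + |v.2 - w.2| * |Real.sin θ| := by
          rw [abs_mul, abs_mul]
      _ ≤ ℓ * |Real.cos θ| + ℓ * |Real.sin θ| := by
          gcongr
      _ = ℓ * (|Real.cos θ| + |Real.sin θ|) := by ring
      _ ≤ ℓ * Real.sqrt 2 := by gcongr
      _ = Real.sqrt 2 * ℓ := mul_comm _ _
  · rw [Real.dist_eq]
    have : c.2 + (v.1 * Real.sin θ + v.2 * Real.cos θ) -
        (c.2 + (w.1 * Real.sin θ + w.2 * Real.cos θ)) =
        (v.1 - w.1) * Real.sin θ + (v.2 - w.2) * Real.cos θ := by ring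
    rw [this]
    calc |(v.1 - w.1) * Real.sin θ + (v.2 - w.2) * Real.cos θ|
        ≤ |(v.1 - w.1) * Real.sin θ| + |(v.2 - w.2) * Real.cos θ| := abs_add_le _ _
      _ = |v.1 - w.1| * |Real.sin θ| + |v.2 - w.2| * |Real.cos θ| := by
          rw [abs_mul, abs_mul]
      _ ≤ ℓ * |Real.sin θ| + ℓ * |Real.cos θ| := by
          gcongr
      _ = ℓ * (|Real.cos θ| + |Real.sin θ|) := by ring
      _ ≤ ℓ * Real.sqrt 2 := by gcongr
      _ = Real.sqrt 2 * ℓ := mul_comm _ _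

lemma ciInf_attained {ι : Type*} [Nonempty ι] [Finite ι] (f : ι → ℝ) :
    ∃ i, (⨅ j, f j) = f i := by
  obtain ⟨i, hi⟩ := Finite.exists_min f
  exact ⟨i, le_antisymm (ciInf_le (Finite.bddBelow_range f) i) (le_ciInf hi)⟩


/-- Farthest-first clustering in the L∞ metric is `2√2`-optimal for square coverage:
if the finite nonempty set `P ⊆ ℝ²` (with the product metric, which is the sup metric)
can be covered by `k` squares of side `ℓ` with arbitrary centers and orientations, and
`c₀, …, c_{k-1} ∈ P` is a farthest-first traversal of `P`, then the L∞ covering radius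
`r` of these centers satisfies `r ≤ √2·ℓ`, and the `k` axis-aligned squares of side
`2√2·ℓ` (closed L∞ balls of radius `√2·ℓ`) centered at `c₀, …, c_{k-1}` cover `P`. -/
theorem farthest_first_square_cover_two_sqrt_two_optimal
    (k : ℕ) (hk : 0 < k) (P : Finset (ℝ × ℝ)) (hP : P.Nonempty)
    (ℓ : ℝ) (hℓ : 0 ≤ ℓ)
    (sc : Fin k → ℝ × ℝ) (sθ : Fin k → ℝ)
    (hsq : (P : Set (ℝ × ℝ)) ⊆ ⋃ i, rotSquare ℓ (sc i) (sθ i))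
    (c : Fin k → ℝ × ℝ) (hcP : ∀ j, c j ∈ P)
    (hff : ∀ j : Fin k, 0 < j.val → ∀ p ∈ P,
      (⨅ i : {i : Fin k // i < j}, dist p (c i.1)) ≤
        ⨅ i : {i : Fin k // i < j}, dist (c j) (c i.1))
    (r : ℝ)
    (hr : r = P.sup' hP fun p => ⨅ i : Fin k, dist p (c i)) :
    r ≤ Real.sqrt 2 * ℓ ∧
      (P : Set (ℝ × ℝ)) ⊆ ⋃ i, Metric.closedBall (c i) (Real.sqrt 2 * ℓ) := by
  have hkne : Nonempty (Fin k) := ⟨⟨0, hk⟩⟩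
  obtain ⟨p₀, hp₀P, hp₀⟩ := P.exists_mem_eq_sup' hP (fun p => ⨅ i : Fin k, dist p (c i))
  have hrp₀ : r = ⨅ i : Fin k, dist p₀ (c i) := by rw [hr, hp₀]
  have hp₀_ge : ∀ i, r ≤ dist p₀ (c i) := fun i =>
    hrp₀ ▸ ciInf_le (Finite.bddBelow_range _) i
  have hsep : ∀ i j : Fin k, i < j → r ≤ dist (c j) (c i) := by
    intro i j hij
    have hj : 0 < j.val := lt_of_le_of_lt (Nat.zero_le i.val) hij
    have hne : Nonempty {i : Fin k // i < j} := ⟨⟨i, hij⟩⟩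
    have h1 : r ≤ ⨅ i' : {i : Fin k // i < j}, dist p₀ (c i'.1) :=
      le_ciInf fun i' => hp₀_ge i'.1
    have h2 := hff j hj p₀ hp₀P
    have h3 : (⨅ i' : {i : Fin k // i < j}, dist (c j) (c i'.1)) ≤ dist (c j) (c i) :=
      ciInf_le (Finite.bddBelow_range _) (⟨i, hij⟩ : {i : Fin k // i < j})
    linarith
  have hmain : r ≤ Real.sqrt 2 * ℓ := by
    by_contra h
    push_neg at h
    set q : Option (Fin k) → ℝ × ℝ := fun o => o.elim p₀ c with hq
    have hqP : ∀ o, q o ∈ P := fun o => by cases o with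
      | none => exact hp₀P
      | some i => exact hcP i
    have hchoice : ∀ o, ∃ i, q o ∈ rotSquare ℓ (sc i) (sθ i) := by
      intro o
      have := hsq (hqP o)
      simpa using this
    choose s hs using hchoice
    have hcard : Fintype.card (Fin k) < Fintype.card (Option (Fin k)) := by simp
    obtain ⟨o₁, o₂, hne, heq⟩ := Fintype.exists_ne_map_eq_of_card_lt s hcard
    have hd : dist (q o₁) (q o₂) ≤ Real.sqrt 2 * ℓ := by
      have h2 := hs o₂
      rw [← heq] at h2
      exact rotSquare_diam hℓ (hs o₁) h2
    have hd2 : r ≤ dist (q o₁) (q o₂) := by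
      match o₁, o₂, hne with
      | none, some i, _ => exact hp₀_ge i
      | some i, none, _ => rw [dist_comm]; exact hp₀_ge i
      | some i, some j, hne =>
        rcases lt_or_gt_of_ne (fun hij : i = j => hne (by rw [hij])) with hij | hij
        · rw [dist_comm]; exact hsep i j hij
        · exact hsep j i hij
      | none, none, hne => exact absurd rfl hne
    linarith
  refine ⟨hmain, ?_⟩
  intro p hp
  have hple : (⨅ i : Fin k, dist p (c i)) ≤ r := by
    rw [hr]; exact Finset.le_sup' (fun p => ⨅ i : Fin k, dist p (c i)) hp
  obtain ⟨i, hi⟩ := ciInf_attained (fun i : Fin k => dist p (c i))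
  refine Set.mem_iUnion.2 ⟨i, ?_⟩
  simp only [Metric.mem_closedBall]
  calc dist p (c i) = _ := hi.symm
    _ ≤ r := hple
    _ ≤ _ := hmain
end
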